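/- Let n ≥ 2 and x, y ∈ ℤⁿ. Define I(x,y) := I(x₁,y₁) × ⋯ × I(xₙ,yₙ), where I(s,t) = [min(s,t), max(s,t)] ⊆ ℤ. If S ⊆ ℤⁿ is connected in the grid graph Gₙ and closed under completing 4-cycles (whenever three vertices of a 4-cycle of Gₙ are in S, so is the fourth), then for all x, y ∈ S, the discrete box I(x,y) is contained in S. -/

import Mathlib

/-!
Follow a grid path `x = p 0, …, p ℓ = y` inside `S` backwards. If the box spanned by `p (k+1)`
and `y` lies in `S` and `p k = p (k+1) + ε eᵢ`, the box spanned by `p k` and `y` is the old box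
together with the translate by `ε eᵢ` of its face `{zᵢ = p (k+1) i}`. That translate is filled
square by square starting from its corner `p k`: an edge `z, z + δ eⱼ` of the face together with
the already filled point `z + ε eᵢ` are three vertices of a 4-cycle.
-/

/-- `d` is one of the `2n` unit directions `±eᵢ` of `ℤⁿ`. -/
def IsUnitDir (n : ℕ) (d : Fin n → ℤ) : Prop :=
  ∃ i : Fin n, d = Pi.single i 1 ∨ d = -Pi.single i 1

open Set

theorem Set.mem_uIcc_pi {ι : Type*} {α : ι → Type*} [∀ i, Lattice (α i)] {a b z : ∀ i, α i} :
    z ∈ uIcc a b ↔ ∀ i, z i ∈ uIcc (a i) (b i) := by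
  rw [← pi_univ_uIcc, mem_univ_pi]

theorem Set.uIcc_eq_setOf_min_le_le_max {ι α : Type*} [LinearOrder α] (a b : ι → α) :
    uIcc a b = {z | ∀ i, min (a i) (b i) ≤ z i ∧ z i ≤ max (a i) (b i)} := by
  ext z
  exact mem_uIcc_pi

section IntegerBoxes

variable {ι : Type*} [DecidableEq ι]

theorem exists_eq_add_single_of_sum_abs_sub_eq_one [Fintype ι] {x y : ι → ℤ}
    (h : ∑ i, |x i - y i| = 1) : ∃ i ε, IsUnit ε ∧ x = y + Pi.single i ε := by
  obtain ⟨i, hi⟩ : ∃ i, x i ≠ y i := by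
    by_contra! hxy
    simp [hxy] at h
  rw [← Finset.add_sum_erase _ _ (Finset.mem_univ i)] at h
  have hi_pos : 0 < |x i - y i| := abs_pos.2 (sub_ne_zero.2 hi)
  have hrest_nonneg :=
    Finset.sum_nonneg fun k (_ : k ∈ Finset.univ.erase i) => abs_nonneg (x k - y k)
  have hrest : ∀ k ∈ Finset.univ.erase i, |x k - y k| = 0 :=
    (Finset.sum_eq_zero_iff_of_nonneg fun k _ => abs_nonneg _).1 (by omega)
  refine ⟨i, x i - y i, Int.isUnit_iff.2 ((abs_eq zero_le_one).1 (by omega)), funext fun k => ?_⟩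
  by_cases hk : k = i
  · subst hk; simp
  · have := hrest k (Finset.mem_erase.2 ⟨hk, Finset.mem_univ k⟩)
    simp [hk, sub_eq_zero.1 (abs_eq_zero.1 this)]

theorem uIcc_induction [Fintype ι] {b c : ι → ℤ} {P : (ι → ℤ) → Prop} (hb : P b)
    (step : ∀ z j δ, IsUnit δ → z ∈ uIcc b c → z + Pi.single j δ ∈ uIcc b c →
      P z → P (z + Pi.single j δ)) :
    ∀ z ∈ uIcc b c, P z := by
  intro z hz
  induction hd : ∑ j, (z j - b j).natAbs using Nat.strong_induction_on generalizing z with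
  | _ d ih =>
  by_cases hzb : z = b
  · exact hzb ▸ hb
  obtain ⟨j, hj⟩ := Function.ne_iff.1 hzb
  obtain ⟨δ, hδ⟩ : ∃ δ : ℤ, δ = 1 ∧ b j < z j ∨ δ = -1 ∧ z j < b j := by
    rcases lt_or_gt_of_ne hj with h | h
    exacts [⟨-1, .inr ⟨rfl, h⟩⟩, ⟨1, .inl ⟨rfl, h⟩⟩]
  have hz' : z - Pi.single j δ ∈ uIcc b c := by
    rw [mem_uIcc_pi] at hz ⊢
    intro k
    have := hz k
    by_cases hk : k = j
    · subst hk
      simp only [mem_uIcc, Pi.sub_apply, Pi.single_eq_same] at this ⊢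
      omega
    · simpa [hk] using this
  have hlt : ∑ k, ((z - Pi.single j δ : ι → ℤ) k - b k).natAbs < d := by
    rw [← hd]
    refine Finset.sum_lt_sum (fun k _ => ?_) ⟨j, Finset.mem_univ j, ?_⟩
    · by_cases hk : k = j
      · subst hk; simp only [Pi.sub_apply, Pi.single_eq_same]; omega
      · simp [hk]
    · simp only [Pi.sub_apply, Pi.single_eq_same]; omega
  simpa using step _ j δ (Int.isUnit_iff.2 (by omega)) hz' (by simpa using hz) (ih _ hlt _ hz' rfl)

end IntegerBoxes

theorem isUnitDir_single {n : ℕ} (i : Fin n) {ε : ℤ} (hε : IsUnit ε) :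
    IsUnitDir n (Pi.single i ε) := by
  rcases Int.isUnit_iff.1 hε with rfl | rfl
  exacts [⟨i, .inl rfl⟩, ⟨i, .inr (Pi.single_neg i 1)⟩]

/-- `x, x + d, x + d + d', x + d'` is a 4-cycle of the grid graph exactly when `d ≠ ±d'`. -/
def SquareClosed {n : ℕ} (S : Set (Fin n → ℤ)) : Prop :=
  ∀ (x d d' : Fin n → ℤ), IsUnitDir n d → IsUnitDir n d' →
    d ≠ d' → d ≠ -d' → x ∈ S → x + d ∈ S → x + d' ∈ S → x + d + d' ∈ S

namespace SquareClosed

variable {n : ℕ} {S : Set (Fin n → ℤ)}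

theorem add_single_add_single (hS : SquareClosed S) {x : Fin n → ℤ} {i j : Fin n} (hij : i ≠ j)
    {ε δ : ℤ} (hε : IsUnit ε) (hδ : IsUnit δ) (hx : x ∈ S) (hxi : x + Pi.single i ε ∈ S)
    (hxj : x + Pi.single j δ ∈ S) : x + Pi.single i ε + Pi.single j δ ∈ S := by
  refine hS x _ _ (isUnitDir_single i hε) (isUnitDir_single j hδ) ?_ ?_ hx hxi hxj <;>
    intro h <;> simpa [hij, hε.ne_zero] using congrFun h i

theorem add_single_mem_of_uIcc_subset (hS : SquareClosed S) {b c : Fin n → ℤ} {i : Fin n}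
    {ε : ℤ} (hε : IsUnit ε) (hbc : b i = c i) (hbox : uIcc b c ⊆ S)
    (hb : b + Pi.single i ε ∈ S) : ∀ z ∈ uIcc b c, z + Pi.single i ε ∈ S := by
  -- The edge `z, z + δ eⱼ` of the face and the pushed point `z + ε eᵢ` span a square.
  refine uIcc_induction hb fun z j δ hδ hz hzj hzi => ?_
  have hij : i ≠ j := by
    rintro rfl
    have h1 := mem_uIcc_pi.1 hz i
    have h2 := mem_uIcc_pi.1 hzj i
    simp only [hbc, uIcc_self, mem_singleton_iff, Pi.add_apply, Pi.single_eq_same] at h1 h2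
    exact hδ.ne_zero (by omega)
  rw [add_right_comm]
  exact hS.add_single_add_single hij hε hδ (hbox hz) hzi (hbox hzj)

theorem uIcc_add_single_subset (hS : SquareClosed S) {b y : Fin n → ℤ} {i : Fin n} {ε : ℤ}
    (hε : IsUnit ε) (hbox : uIcc b y ⊆ S) (ha : b + Pi.single i ε ∈ S) :
    uIcc (b + Pi.single i ε) y ⊆ S := by
  intro z hz
  rw [mem_uIcc_pi] at hz
  have hcoord : ∀ k ≠ i, z k ∈ uIcc (b k) (y k) := fun k hk => by simpa [hk] using hz k
  by_cases hzi : z i ∈ uIcc (b i) (y i)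
  · exact hbox (mem_uIcc_pi.2 fun k => if hk : k = i then hk ▸ hzi else hcoord k hk)
  -- Outside the old box, `z` is the translate of a point of the face of `uIcc b y` through `b`.
  have hzi' : z i = b i + ε := by
    have := hz i
    simp only [mem_uIcc, Pi.add_apply, Pi.single_eq_same] at this hzi
    rcases Int.isUnit_iff.1 hε with rfl | rfl <;> omega
  have hface : uIcc b (Function.update y i (b i)) ⊆ uIcc b y := by
    refine uIcc_subset_uIcc left_mem_uIcc (mem_uIcc_pi.2 fun k => ?_)
    by_cases hk : k = i
    · subst hk; simp
    · simp [hk]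
  have hz' : z - Pi.single i ε ∈ uIcc b (Function.update y i (b i)) := by
    refine mem_uIcc_pi.2 fun k => ?_
    by_cases hk : k = i
    · subst hk; simp [hzi']
    · simpa [hk] using hcoord k hk
  simpa using hS.add_single_mem_of_uIcc_subset hε (by simp) (hface.trans hbox) ha _ hz'

theorem uIcc_subset_of_path (hS : SquareClosed S) {ℓ : ℕ} {p : ℕ → Fin n → ℤ}
    (hstep : ∀ j < ℓ, ∑ i, |p j i - p (j + 1) i| = 1) (hmem : ∀ j ≤ ℓ, p j ∈ S) :
    uIcc (p 0) (p ℓ) ⊆ S := by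
  induction ℓ generalizing p with
  | zero => simpa using hmem 0 le_rfl
  | succ ℓ ih =>
    have htail : uIcc (p 1) (p (ℓ + 1)) ⊆ S :=
      ih (p := fun j => p (j + 1)) (fun j hj => hstep (j + 1) (by omega))
        (fun j hj => hmem (j + 1) (by omega))
    obtain ⟨i, ε, hε, hp⟩ := exists_eq_add_single_of_sum_abs_sub_eq_one (hstep 0 ℓ.succ_pos)
    rw [hp]
    exact hS.uIcc_add_single_subset hε htail (hp ▸ hmem 0 ℓ.succ.zero_le)

end SquareClosed

theorem stmt9_general (n : ℕ) (S : Set (Fin n → ℤ))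
    (hconn : ∀ x ∈ S, ∀ y ∈ S, ∃ (ℓ : ℕ) (p : ℕ → Fin n → ℤ),
      p 0 = x ∧ p ℓ = y ∧ (∀ j < ℓ, (∑ i, |p j i - p (j + 1) i|) = 1) ∧ ∀ j ≤ ℓ, p j ∈ S)
    (hconv : ∀ (x d d' : Fin n → ℤ), IsUnitDir n d → IsUnitDir n d' →
      d ≠ d' → d ≠ -d' → x ∈ S → x + d ∈ S → x + d' ∈ S → x + d + d' ∈ S) :
    ∀ x ∈ S, ∀ y ∈ S,
      {z : Fin n → ℤ | ∀ i, min (x i) (y i) ≤ z i ∧ z i ≤ max (x i) (y i)} ⊆ S := by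
  intro x hx y hy
  obtain ⟨ℓ, p, rfl, rfl, hstep, hmem⟩ := hconn x hx y hy
  rw [← uIcc_eq_setOf_min_le_le_max]
  exact SquareClosed.uIcc_subset_of_path hconv hstep hmem

/-- If `S ⊆ ℤⁿ` (`n ≥ 2`) is connected in the grid graph and closed under
completing 4-cycles, then for all `x, y ∈ S` the discrete box
`I(x,y) = ∏ᵢ [min(xᵢ,yᵢ), max(xᵢ,yᵢ)]` is contained in `S`. -/
theorem stmt9 (n : ℕ) (hn : 2 ≤ n) (S : Set (Fin n → ℤ))
    (hconn : ∀ x ∈ S, ∀ y ∈ S, ∃ (ℓ : ℕ) (p : ℕ → Fin n → ℤ),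
      p 0 = x ∧ p ℓ = y ∧ (∀ j < ℓ, (∑ i, |p j i - p (j + 1) i|) = 1) ∧ ∀ j ≤ ℓ, p j ∈ S)
    (hconv : ∀ (x d d' : Fin n → ℤ), IsUnitDir n d → IsUnitDir n d' →
      d ≠ d' → d ≠ -d' → x ∈ S → x + d ∈ S → x + d' ∈ S → x + d + d' ∈ S) :
    ∀ x ∈ S, ∀ y ∈ S,
      {z : Fin n → ℤ | ∀ i, min (x i) (y i) ≤ z i ∧ z i ≤ max (x i) (y i)} ⊆ S :=
  stmt9_general n S hconn hconv
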